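/- The sequence n ↦ ∑_{j=1}^n φ′(j)/φ(j) − log φ(n) converges as n → ∞, and its limit γ_φ satisfies γ_φ = −log φ(1) + ∫_(0,∞) ( e^{−x} − 1 + x ) · (e^{−x}/(1 − e^{−x})) H(dx), the integral being finite. -/

import Mathlib

open MeasureTheory Real Set Filter Topology

noncomputable section

/-! Since `(log φ)' = φ'/φ = ∫ x e^{-λx} H(dx)`, integrating over `[1, n]` gives
`log φ(n) - log φ(1) = ∫ (e^{-x} - e^{-nx}) H(dx)`, so the `n`-th term of the sequence is
`-log φ(1) + ∫ K_n dH` with `K_n(x) = x ∑_{j=1}^n e^{-jx} - (e^{-x} - e^{-nx})`.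
With `r = e^{-x}` one has `K_{n+1} - K_n = r^n ((1 + x) r - 1) ≤ 0`, so `K_n` decreases to
`(r - 1 + x) r / (1 - r) ≥ 0` and is dominated by `K_1 = x e^{-x}`, which is `H`-integrable;
monotone convergence concludes. Since a Bernstein function is nondecreasing, `φ' ≥ 0`, which is
what turns the `ℝ≥0∞`-valued identity defining `H` into a real one. -/

lemma exp_neg_sub_exp_neg_le (u v : ℝ) :
    Real.exp (-u) - Real.exp (-v) ≤ (v - u) * Real.exp (-u) := by
  have h := one_sub_le_exp_neg (v - u)
  have hv : Real.exp (-v) = Real.exp (-u) * Real.exp (-(v - u)) := by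
    rw [← Real.exp_add]; ring_nf
  rw [hv]
  nlinarith [Real.exp_pos (-u)]

lemma abs_exp_neg_sub_exp_neg_le (u v : ℝ) :
    |Real.exp (-u) - Real.exp (-v)| ≤ |v - u| * Real.exp (-min u v) := by
  rcases le_total u v with h | h
  · rw [abs_of_nonneg (sub_nonneg.2 (Real.exp_le_exp.2 (neg_le_neg h))),
      abs_of_nonneg (sub_nonneg.2 h), min_eq_left h]
    exact exp_neg_sub_exp_neg_le _ _
  · rw [abs_sub_comm, abs_sub_comm v,
      abs_of_nonneg (sub_nonneg.2 (Real.exp_le_exp.2 (neg_le_neg h))),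
      abs_of_nonneg (sub_nonneg.2 h), min_eq_right h]
    exact exp_neg_sub_exp_neg_le _ _

lemma exp_neg_natCast_mul (n : ℕ) (x : ℝ) : Real.exp (-(n * x)) = Real.exp (-x) ^ n := by
  rw [← Real.exp_nat_mul]; ring_nf

lemma ae_pos_of_measure_Iic_eq_zero {μ : Measure ℝ} (h : μ (Iic 0) = 0) : ∀ᵐ x ∂μ, 0 < x := by
  rw [ae_iff]
  simp only [not_lt]
  exact h

lemma integrable_and_integral_eq_of_lintegral_ofReal_eq {α : Type*} [MeasurableSpace α]
    {μ : Measure α} {f : α → ℝ} {c : ℝ} (hf : 0 ≤ᵐ[μ] f) (hfm : AEStronglyMeasurable f μ)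
    (hc : 0 ≤ c) (h : ∫⁻ x, ENNReal.ofReal (f x) ∂μ = ENNReal.ofReal c) :
    Integrable f μ ∧ ∫ x, f x ∂μ = c := by
  refine ⟨⟨hfm, ?_⟩, ?_⟩
  · rw [hasFiniteIntegral_iff_ofReal hf, h]
    exact ENNReal.ofReal_lt_top
  · rw [integral_eq_lintegral_of_nonneg_ae hf hfm, h, ENNReal.toReal_ofReal hc]

lemma one_sub_exp_neg_mul_le {l x : ℝ} (hl : 0 ≤ l) (hx : 0 ≤ x) :
    1 - Real.exp (-(l * x)) ≤ (l + 1) * min x 1 := by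
  have h₁ := one_sub_le_exp_neg (l * x)
  have h₂ := Real.exp_pos (-(l * x))
  rcases le_total x 1 with h | h
  · rw [min_eq_left h]; nlinarith
  · rw [min_eq_right h]; nlinarith

section Bernstein

variable {ν : Measure ℝ} (hν0 : ν (Iic 0) = 0)
  (hνint : ∫⁻ x, ENNReal.ofReal (min x 1) ∂ν < ⊤)
include hν0 hνint

lemma integrable_one_sub_exp_neg_mul {l : ℝ} (hl : 0 ≤ l) :
    Integrable (fun x => 1 - Real.exp (-(l * x))) ν := by
  have hνpos := ae_pos_of_measure_Iic_eq_zero hν0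
  have hmin : Integrable (fun x => min x 1) ν := by
    refine ⟨by fun_prop, ?_⟩
    rwa [hasFiniteIntegral_iff_ofReal (hνpos.mono fun x hx => le_min hx.le zero_le_one)]
  refine (hmin.const_mul (l + 1)).mono' (by fun_prop) ?_
  filter_upwards [hνpos] with x hx
  have h₁ : Real.exp (-(l * x)) ≤ 1 := Real.exp_le_one_iff.2 (by simp; positivity)
  rw [Real.norm_eq_abs, abs_of_nonneg (by linarith)]
  exact one_sub_exp_neg_mul_le hl hx.le

lemma monotoneOn_bernstein {q a : ℝ} (ha : 0 ≤ a) :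
    MonotoneOn (fun l => q + a * l + ∫ x, (1 - Real.exp (-(l * x))) ∂ν) (Ici 0) := by
  intro l₁ hl₁ l₂ hl₂ h
  have hI : ∫ x, (1 - Real.exp (-(l₁ * x))) ∂ν ≤ ∫ x, (1 - Real.exp (-(l₂ * x))) ∂ν := by
    refine integral_mono_ae (integrable_one_sub_exp_neg_mul hν0 hνint hl₁)
      (integrable_one_sub_exp_neg_mul hν0 hνint hl₂) ?_
    filter_upwards [ae_pos_of_measure_Iic_eq_zero hν0] with x hx
    have := Real.exp_le_exp.2 (neg_le_neg (mul_le_mul_of_nonneg_right h hx.le))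
    linarith
  have := mul_le_mul_of_nonneg_left h ha
  simp only
  linarith

lemma deriv_nonneg_of_eq_bernstein {q a : ℝ} (ha : 0 ≤ a) {φ : ℝ → ℝ}
    (hφ : ∀ l : ℝ, 0 ≤ l → φ l = q + a * l + ∫ x, (1 - Real.exp (-(l * x))) ∂ν)
    {l : ℝ} (hl : 0 < l) : 0 ≤ deriv φ l := by
  have hmono : MonotoneOn φ (Ioi 0) := fun l₁ hl₁ l₂ hl₂ h => by
    rw [hφ l₁ hl₁.le, hφ l₂ hl₂.le]
    exact monotoneOn_bernstein hν0 hνint ha (mem_Ici.2 hl₁.le) (mem_Ici.2 hl₂.le) h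
  rw [← derivWithin_of_isOpen isOpen_Ioi hl]
  exact hmono.derivWithin_nonneg

end Bernstein

section LaplaceDifference

variable {H : Measure ℝ} (hH0 : H (Iic 0) = 0)
  (hint : ∀ l : ℝ, 0 < l → Integrable (fun x => x * Real.exp (-(l * x))) H)
include hH0 hint

lemma integrable_exp_neg_sub_exp_neg_mul {t : ℝ} (ht : 0 < t) :
    Integrable (fun x => Real.exp (-x) - Real.exp (-(t * x))) H := by
  refine ((hint _ (lt_min one_pos ht)).const_mul |t - 1|).mono' (by fun_prop) ?_
  filter_upwards [ae_pos_of_measure_Iic_eq_zero hH0] with x hx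
  calc ‖Real.exp (-x) - Real.exp (-(t * x))‖
      ≤ |t * x - x| * Real.exp (-min x (t * x)) := abs_exp_neg_sub_exp_neg_le _ _
    _ = |t - 1| * (x * Real.exp (-(min 1 t * x))) := by
      rw [min_mul_of_nonneg _ _ hx.le, one_mul, ← sub_one_mul, abs_mul, abs_of_pos hx, mul_assoc]

lemma hasDerivAt_integral_exp_neg_sub_exp_neg_mul {t : ℝ} (ht : 0 < t) :
    HasDerivAt (fun s => ∫ x, (Real.exp (-x) - Real.exp (-(s * x))) ∂H)
      (∫ x, x * Real.exp (-(t * x)) ∂H) t := by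
  have ht2 : 0 < t / 2 := half_pos ht
  refine (hasDerivAt_integral_of_dominated_loc_of_deriv_le
    (F := fun s x => Real.exp (-x) - Real.exp (-(s * x)))
    (F' := fun s x => x * Real.exp (-(s * x))) (Metric.ball_mem_nhds t ht2)
    (Eventually.of_forall fun s => by fun_prop)
    (integrable_exp_neg_sub_exp_neg_mul hH0 hint ht) (by fun_prop) ?_ (hint _ ht2) ?_).2
  · filter_upwards [ae_pos_of_measure_Iic_eq_zero hH0] with x hx s hs
    rw [Metric.mem_ball, Real.dist_eq, abs_lt] at hs
    rw [Real.norm_eq_abs, abs_of_nonneg (by positivity)]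
    exact mul_le_mul_of_nonneg_left (Real.exp_le_exp.2 (by nlinarith)) hx.le
  · refine Eventually.of_forall fun x s _ => ?_
    have h := (hasDerivAt_mul_const (x := s) x).fun_neg.exp.const_sub (Real.exp (-x))
    convert h using 1
    ring

end LaplaceDifference

lemma log_eq_log_one_add_of_hasDerivAt {φ ψ : ℝ → ℝ} (hφpos : ∀ t : ℝ, 0 < t → 0 < φ t)
    (hφdiff : ∀ t : ℝ, 0 < t → DifferentiableAt ℝ φ t)
    (hψ : ∀ t : ℝ, 0 < t → HasDerivAt ψ (deriv φ t / φ t) t) {t : ℝ} (ht : 0 < t) :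
    Real.log (φ t) = Real.log (φ 1) + (ψ t - ψ 1) := by
  have hlog : ∀ s : ℝ, 0 < s → HasDerivAt (fun s => Real.log (φ s)) (deriv φ s / φ s) s :=
    fun s hs => (hφdiff s hs).hasDerivAt.log (hφpos s hs).ne'
  have hrhs : ∀ s : ℝ, 0 < s →
      HasDerivAt (fun s => Real.log (φ 1) + (ψ s - ψ 1)) (deriv φ s / φ s) s :=
    fun s hs => by simpa using ((hψ s hs).sub_const (ψ 1)).const_add (Real.log (φ 1))
  refine isOpen_Ioi.eqOn_of_deriv_eq (convex_Ioi 0).isPreconnected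
    (fun s hs => (hlog s hs).differentiableAt.differentiableWithinAt)
    (fun s hs => (hrhs s hs).differentiableAt.differentiableWithinAt)
    (fun s hs => (hlog s hs).deriv.trans (hrhs s hs).deriv.symm) (mem_Ioi.2 one_pos) (by simp) ht

def eulerKernel (n : ℕ) (x : ℝ) : ℝ :=
  ∑ j ∈ Finset.Icc 1 n, x * Real.exp (-(j * x)) - (Real.exp (-x) - Real.exp (-(n * x)))

lemma eulerKernel_one (x : ℝ) : eulerKernel 1 x = x * Real.exp (-x) := by
  simp [eulerKernel]

lemma antitone_eulerKernel {x : ℝ} : Antitone (eulerKernel · x) := by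
  refine antitone_nat_of_succ_le fun n => ?_
  have hstep : Real.exp (-((n + 1 : ℕ) * x)) = Real.exp (-(n * x)) * Real.exp (-x) := by
    rw [← Real.exp_add]; push_cast; ring_nf
  have hx : (1 + x) * Real.exp (-x) ≤ 1 := by
    rw [Real.exp_neg, ← div_eq_mul_inv, div_le_one (Real.exp_pos x)]
    linarith [Real.add_one_le_exp x]
  simp only [eulerKernel, Finset.sum_Icc_succ_top (Nat.le_add_left 1 n), hstep]
  nlinarith [Real.exp_pos (-(n * x))]

lemma tendsto_eulerKernel {x : ℝ} (hx : 0 < x) :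
    Tendsto (eulerKernel · x) atTop
      (𝓝 ((Real.exp (-x) - 1 + x) * (Real.exp (-x) / (1 - Real.exp (-x))))) := by
  set r := Real.exp (-x)
  have hr1 : r < 1 := Real.exp_lt_one_iff.2 (by linarith)
  have hpow : Tendsto (r ^ ·) atTop (𝓝 0) :=
    tendsto_pow_atTop_nhds_zero_of_lt_one (Real.exp_pos _).le hr1
  have hgeom : Tendsto (fun n => ∑ j ∈ Finset.Icc 1 n, r ^ j) atTop (𝓝 (r * (1 - r)⁻¹)) := by
    have := ((hasSum_geometric_of_lt_one (Real.exp_pos _).le hr1).tendsto_sum_nat).const_mul r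
    refine this.congr fun n => ?_
    rw [Finset.mul_sum, ← Finset.Ico_add_one_right_eq_Icc, Finset.sum_Ico_eq_sum_range]
    simp [r, pow_succ', add_comm]
  have hform : ∀ n, eulerKernel n x = x * ∑ j ∈ Finset.Icc 1 n, r ^ j - (r - r ^ n) := by
    intro n
    simp only [eulerKernel, exp_neg_natCast_mul, Finset.mul_sum, r]
  simp_rw [hform]
  convert (hgeom.const_mul x).sub (hpow.const_sub r) using 2
  field_simp [(sub_pos.2 hr1).ne']
  ring

lemma eulerKernel_limit_nonneg {x : ℝ} (hx : 0 < x) :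
    0 ≤ (Real.exp (-x) - 1 + x) * (Real.exp (-x) / (1 - Real.exp (-x))) := by
  have hr1 : Real.exp (-x) < 1 := Real.exp_lt_one_iff.2 (by linarith)
  have := one_sub_le_exp_neg x
  exact mul_nonneg (by linarith) (div_nonneg (Real.exp_pos _).le (by linarith))

lemma integrable_eulerKernel_limit {H : Measure ℝ} (hH0 : H (Iic 0) = 0)
    (h : Integrable (fun x => x * Real.exp (-x)) H) :
    Integrable (fun x => (Real.exp (-x) - 1 + x) * (Real.exp (-x) / (1 - Real.exp (-x)))) H := by
  refine h.mono' (by fun_prop) ?_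
  filter_upwards [ae_pos_of_measure_Iic_eq_zero hH0] with x hx
  rw [Real.norm_eq_abs, abs_of_nonneg (eulerKernel_limit_nonneg hx), ← eulerKernel_one]
  exact antitone_eulerKernel.le_of_tendsto (tendsto_eulerKernel hx) 1

section LogDerivative

variable {φ : ℝ → ℝ} {H : Measure ℝ} (hH0 : H (Iic 0) = 0)
  (hlap : ∀ l : ℝ, 0 < l → Integrable (fun x => x * Real.exp (-(l * x))) H ∧
    ∫ x, x * Real.exp (-(l * x)) ∂H = deriv φ l / φ l)
include hH0 hlap

lemma integrable_eulerKernel {n : ℕ} (hn : 1 ≤ n) : Integrable (eulerKernel n) H := by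
  unfold eulerKernel
  exact (integrable_finsetSum _
      fun (j : ℕ) hj => (hlap j (Nat.cast_pos.2 (Finset.mem_Icc.1 hj).1)).1).sub
    (integrable_exp_neg_sub_exp_neg_mul hH0 (fun l hl => (hlap l hl).1) (Nat.cast_pos.2 hn))

lemma sum_logDeriv_sub_log_eq_integral_eulerKernel (hφpos : ∀ t : ℝ, 0 < t → 0 < φ t)
    (hφdiff : ∀ t : ℝ, 0 < t → DifferentiableAt ℝ φ t) {n : ℕ} (hn : 1 ≤ n) :
    ∑ j ∈ Finset.Icc 1 n, deriv φ j / φ j - Real.log (φ n)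
      = -Real.log (φ 1) + ∫ x, eulerKernel n x ∂H := by
  have hint : ∀ l : ℝ, 0 < l → Integrable (fun x => x * Real.exp (-(l * x))) H :=
    fun l hl => (hlap l hl).1
  have hj : ∀ j ∈ Finset.Icc 1 n, (0 : ℝ) < j :=
    fun j hj => Nat.cast_pos.2 (Finset.mem_Icc.1 hj).1
  have hlog := log_eq_log_one_add_of_hasDerivAt hφpos hφdiff
    (fun t ht => (hlap t ht).2 ▸ hasDerivAt_integral_exp_neg_sub_exp_neg_mul hH0 hint ht)
    (Nat.cast_pos.2 hn)
  simp only [eulerKernel]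
  rw [hlog, integral_sub (integrable_finsetSum _ fun (j : ℕ) hj' => hint j (hj j hj'))
      (integrable_exp_neg_sub_exp_neg_mul hH0 hint (Nat.cast_pos.2 hn)),
    integral_finsetSum _ fun (j : ℕ) hj' => hint j (hj j hj'),
    Finset.sum_congr rfl fun (j : ℕ) hj' => (hlap j (hj j hj')).2]
  simp only [one_mul, sub_self, integral_zero, sub_zero]
  ring

end LogDerivative

theorem stmt11_general
    (q a : ℝ) (ha : 0 ≤ a)
    (ν : Measure ℝ) (hν0 : ν (Set.Iic 0) = 0)
    (hνint : ∫⁻ x, ENNReal.ofReal (min x 1) ∂ν < ⊤)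
    (φ : ℝ → ℝ)
    (hφ : ∀ l : ℝ, 0 ≤ l → φ l = q + a * l + ∫ x, (1 - Real.exp (-(l * x))) ∂ν)
    (hφpos : ∀ l : ℝ, 0 < l → 0 < φ l)
    (hφdiff : ∀ l : ℝ, 0 < l → DifferentiableAt ℝ φ l)
    (H : Measure ℝ) (hH0 : H (Set.Iic 0) = 0)
    (hH : ∀ l : ℝ, 0 < l →
      ∫⁻ x, ENNReal.ofReal (x * Real.exp (-(l * x))) ∂H
        = ENNReal.ofReal (deriv φ l / φ l)) :
    Integrable
      (fun x => (Real.exp (-x) - 1 + x) * (Real.exp (-x) / (1 - Real.exp (-x)))) H ∧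
    Tendsto
      (fun n : ℕ => (∑ j ∈ Finset.Icc 1 n, deriv φ j / φ j) - Real.log (φ n))
      atTop
      (𝓝 (-Real.log (φ 1) +
        ∫ x, (Real.exp (-x) - 1 + x) * (Real.exp (-x) / (1 - Real.exp (-x))) ∂H)) := by
  have hHpos := ae_pos_of_measure_Iic_eq_zero hH0
  have hlap : ∀ l : ℝ, 0 < l → Integrable (fun x => x * Real.exp (-(l * x))) H ∧
      ∫ x, x * Real.exp (-(l * x)) ∂H = deriv φ l / φ l := fun l hl =>
    integrable_and_integral_eq_of_lintegral_ofReal_eq (hHpos.mono fun x hx => by positivity)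
      (by fun_prop)
      (div_nonneg (deriv_nonneg_of_eq_bernstein hν0 hνint ha hφ hl) (hφpos l hl).le) (hH l hl)
  have hG := integrable_eulerKernel_limit hH0 (by simpa using (hlap 1 one_pos).1)
  refine ⟨hG, ?_⟩
  rw [← tendsto_add_atTop_iff_nat 1]
  have hlim := integral_tendsto_of_tendsto_of_antitone
    (fun n => integrable_eulerKernel hH0 hlap (Nat.le_add_left 1 n)) hG
    (ae_of_all _ fun x m n h => antitone_eulerKernel (by omega))
    (hHpos.mono fun x hx => (tendsto_eulerKernel hx).comp (tendsto_add_atTop_nat 1))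
  exact (tendsto_const_nhds.add hlim).congr fun n => (sum_logDeriv_sub_log_eq_integral_eulerKernel
    hH0 hlap hφpos hφdiff (Nat.le_add_left 1 n)).symm

/-- the sequence `n ↦ ∑_{j=1}^n φ'(j)/φ(j) − log φ(n)` converges, the
integral `∫ (e^{-x} − 1 + x) e^{-x}/(1−e^{-x}) H(dx)` is finite, and the limit equals
`−log φ(1) + ∫ (e^{-x} − 1 + x) e^{-x}/(1−e^{-x}) H(dx)`. -/
theorem stmt11
    (q a : ℝ) (hq : 0 ≤ q) (ha : 0 ≤ a)
    (ν : Measure ℝ) (hν0 : ν (Set.Iic 0) = 0)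
    (hνint : ∫⁻ x, ENNReal.ofReal (min x 1) ∂ν < ⊤)
    (hnz : ¬(q = 0 ∧ a = 0 ∧ ν = 0))
    (φ : ℝ → ℝ)
    (hφ : ∀ l : ℝ, 0 ≤ l → φ l = q + a * l + ∫ x, (1 - Real.exp (-(l * x))) ∂ν)
    (hφpos : ∀ l : ℝ, 0 < l → 0 < φ l)
    (hφdiff : ∀ l : ℝ, 0 < l → DifferentiableAt ℝ φ l)
    (H : Measure ℝ) (hH0 : H (Set.Iic 0) = 0)
    (hH : ∀ l : ℝ, 0 < l →
      ∫⁻ x, ENNReal.ofReal (x * Real.exp (-(l * x))) ∂H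
        = ENNReal.ofReal (deriv φ l / φ l)) :
    Integrable
      (fun x => (Real.exp (-x) - 1 + x) * (Real.exp (-x) / (1 - Real.exp (-x)))) H ∧
    Tendsto
      (fun n : ℕ => (∑ j ∈ Finset.Icc 1 n, deriv φ j / φ j) - Real.log (φ n))
      atTop
      (𝓝 (-Real.log (φ 1) +
        ∫ x, (Real.exp (-x) - 1 + x) * (Real.exp (-x) / (1 - Real.exp (-x))) ∂H)) :=
  stmt11_general q a ha ν hν0 hνint φ hφ hφpos hφdiff H hH0 hH
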